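/- arXiv:math/0701709 — 11 statements merged into one kernel-verified Lean document; each statement's English description precedes it below -/
import Mathlib

section
/- Let G be a group containing an element g with g² ≠ 1, and let α, β, γ, δ ∈ Θ. Then the magma G(α,β,γ,δ) has a two-sided identity element if and only if α ∈ {xy, yx}, β ∈ {xy, yx, yx⁻¹, x⁻¹y}, and γ ∈ {xy, yx, y⁻¹x, xy⁻¹} (no condition on δ). Moreover, when a two-sided identity exists, it is the identity element 1 of G (viewed in the copy G ⊆ G ∪ Ḡ). -/
/-- A binary operation on `G`. -/
abbrev Op (G : Type*) := G → G → G

variable {G : Type*}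

/-- `(x,y) ↦ xy` -/
def oXY [Group G] : Op G := fun x y => x * y
/-- `(x,y) ↦ xy⁻¹` -/
def oXYi [Group G] : Op G := fun x y => x * y⁻¹
/-- `(x,y) ↦ x⁻¹y` -/
def oXiY [Group G] : Op G := fun x y => x⁻¹ * y
/-- `(x,y) ↦ x⁻¹y⁻¹` -/
def oXiYi [Group G] : Op G := fun x y => x⁻¹ * y⁻¹
/-- `(x,y) ↦ yx` -/
def oYX [Group G] : Op G := fun x y => y * x
/-- `(x,y) ↦ yx⁻¹` -/
def oYXi [Group G] : Op G := fun x y => y * x⁻¹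
/-- `(x,y) ↦ y⁻¹x` -/
def oYiX [Group G] : Op G := fun x y => y⁻¹ * x
/-- `(x,y) ↦ y⁻¹x⁻¹` -/
def oYiXi [Group G] : Op G := fun x y => y⁻¹ * x⁻¹

/-- The set `Θ` of eight multiplicative operations. -/
def Theta (G : Type*) [Group G] : Set (Op G) :=
  {oXY, oXYi, oXiY, oXiYi, oYX, oYXi, oYiX, oYiXi}

/-- The multiplication of the magma `G(α,β,γ,δ)` on `G ∪ Ḡ`, realized on `G × Bool`;
`(g, false)` stands for `g ∈ G` and `(g, true)` stands for `ḡ ∈ Ḡ`. -/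
def cmul (α β γ δ : Op G) : G × Bool → G × Bool → G × Bool
  | (g, false), (h, false) => (α g h, false)
  | (g, false), (h, true)  => (β g h, true)
  | (g, true),  (h, false) => (γ g h, true)
  | (g, true),  (h, true)  => (δ g h, false)

/-- The multiplication of the Chein loop `M(G,2) = G(xy, yx, xy⁻¹, y⁻¹x)`. -/
def chein [Group G] : G × Bool → G × Bool → G × Bool := cmul oXY oYX oXYi oYiX

/-- Isomorphism of magmas: a bijection respecting the two multiplications. -/
def MagIso {A B : Type*} (m : A → A → A) (n : B → B → B) : Prop :=
  ∃ f : A ≃ B, ∀ a b, f (m a b) = n (f a) (f b)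

/-- If `G` has an element of with `g² ≠ 1` and `α,β,γ,δ ∈ Θ`, then
`G(α,β,γ,δ)` has a two-sided identity iff `α ∈ {xy, yx}`, `β ∈ {xy, yx, yx⁻¹, x⁻¹y}`
and `γ ∈ {xy, yx, y⁻¹x, xy⁻¹}`; moreover any two-sided identity equals `1 ∈ G`. -/
theorem statement2 [Group G] (hg : ∃ g : G, g ^ 2 ≠ 1)
    (α β γ δ : Op G)
    (hα : α ∈ Theta G) (hβ : β ∈ Theta G) (hγ : γ ∈ Theta G) (hδ : δ ∈ Theta G) :
    ((∃ e : G × Bool, ∀ a, cmul α β γ δ e a = a ∧ cmul α β γ δ a e = a) ↔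
      (α ∈ ({oXY, oYX} : Set (Op G)) ∧
        β ∈ ({oXY, oYX, oYXi, oXiY} : Set (Op G)) ∧
        γ ∈ ({oXY, oYX, oYiX, oXYi} : Set (Op G)))) ∧
    (∀ e : G × Bool, (∀ a, cmul α β γ δ e a = a ∧ cmul α β γ δ a e = a) →
      e = ((1 : G), false)) := by

  obtain ⟨g, hg2⟩ := hg
  have hgg : g⁻¹ ≠ g := by
    intro h; apply hg2; rw [sq]; nth_rewrite 1 [← h]; exact inv_mul_cancel g
  simp only [Theta, Set.mem_insert_iff, Set.mem_singleton_iff] at hα hβ hγ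
  have key : ∀ e : G × Bool, (∀ a, cmul α β γ δ e a = a ∧ cmul α β γ δ a e = a) →
      e = ((1:G), false) ∧ α ∈ ({oXY, oYX} : Set (Op G)) ∧
        β ∈ ({oXY, oYX, oYXi, oXiY} : Set (Op G)) ∧
        γ ∈ ({oXY, oYX, oYiX, oXYi} : Set (Op G)) := by
    rintro ⟨e, b⟩ he
    cases b with
    | true =>
        have h0 := (he ((1:G), false)).1
        simp [cmul] at h0
    | false =>
      have hA : ∀ h : G, α e h = h ∧ α h e = h := by
        intro h
        have h1 := (he (h, false)).1
        have h2 := (he (h, false)).2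
        simp only [cmul, Prod.mk.injEq] at h1 h2
        exact ⟨h1.1, h2.1⟩
      have hB : ∀ h : G, β e h = h := by
        intro h
        have h1 := (he (h, true)).1
        simp only [cmul, Prod.mk.injEq] at h1
        exact h1.1
      have hC : ∀ h : G, γ h e = h := by
        intro h
        have h2 := (he (h, true)).2
        simp only [cmul, Prod.mk.injEq] at h2
        exact h2.1
      have he1 : e = 1 := by
        rcases hα with h|h|h|h|h|h|h|h <;> subst h <;>
          simpa [oXY, oXYi, oXiY, oXiYi, oYX, oYXi, oYiX, oYiXi] using (hA 1).1
      subst he1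
      refine ⟨rfl, ?_, ?_, ?_⟩
      · rcases hα with h|h|h|h|h|h|h|h <;> subst h
        · exact Set.mem_insert _ _
        · have := (hA g).1; simp [oXYi] at this; exact absurd this hgg
        · have := (hA g).2; simp [oXiY] at this; exact absurd this hgg
        · have := (hA g).1; simp [oXiYi] at this; exact absurd this hgg
        · exact Set.mem_insert_of_mem _ rfl
        · have := (hA g).2; simp [oYXi] at this; exact absurd this hgg
        · have := (hA g).1; simp [oYiX] at this; exact absurd this hgg
        · have := (hA g).1; simp [oYiXi] at this; exact absurd this hgg
      · rcases hβ with h|h|h|h|h|h|h|h <;> subst h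
        · exact Set.mem_insert _ _
        · have := hB g; simp [oXYi] at this; exact absurd this hgg
        · right; right; right; rfl
        · have := hB g; simp [oXiYi] at this; exact absurd this hgg
        · right; left; rfl
        · right; right; left; rfl
        · have := hB g; simp [oYiX] at this; exact absurd this hgg
        · have := hB g; simp [oYiXi] at this; exact absurd this hgg
      · rcases hγ with h|h|h|h|h|h|h|h <;> subst h
        · exact Set.mem_insert _ _
        · right; right; right; rfl
        · have := hC g; simp [oXiY] at this; exact absurd this hgg
        · have := hC g; simp [oXiYi] at this; exact absurd this hgg
        · right; left; rfl
        · have := hC g; simp [oYXi] at this; exact absurd this hgg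
        · right; right; left; rfl
        · have := hC g; simp [oYiXi] at this; exact absurd this hgg
  refine ⟨⟨fun ⟨e, he⟩ => (key e he).2, ?_⟩, fun e he => (key e he).1⟩
  rintro ⟨hα', hβ', hγ'⟩
  simp only [Set.mem_insert_iff, Set.mem_singleton_iff] at hα' hβ' hγ'
  have hα1 : ∀ h : G, α 1 h = h ∧ α h 1 = h := by
    rcases hα' with h|h <;> subst h <;> intro h' <;> simp [oXY, oYX]
  have hβ1 : ∀ h : G, β 1 h = h := by
    rcases hβ' with h|h|h|h <;> subst h <;> intro h' <;>
      simp [oXY, oYX, oYXi, oXiY]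
  have hγ1 : ∀ h : G, γ h 1 = h := by
    rcases hγ' with h|h|h|h <;> subst h <;> intro h' <;>
      simp [oXY, oYX, oYiX, oXYi]
  refine ⟨((1:G), false), ?_⟩
  rintro ⟨a, (_|_)⟩
  · simpa [cmul, Prod.ext_iff] using hα1 a
  · simp only [cmul, Prod.mk.injEq]
    exact ⟨⟨hβ1 a, trivial⟩, ⟨hγ1 a, trivial⟩⟩
end

section
/- Let G be a finite abelian group containing an element g with g² ≠ 1. Let α = γ = ((x,y) ↦ xy), β ∈ {xy, x⁻¹y}, and δ ∈ {xy, x⁻¹y, xy⁻¹, x⁻¹y⁻¹}. Then the multiplication * of G(α,β,γ,δ) is associative (equivalently, G(α,β,γ,δ) is a group) if and only if (β,δ) ∈ {(xy, xy), (x⁻¹y, x⁻¹y)}. -/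
variable {G : Type*}

/-- Associativity in the abelian case. -/
theorem statement5 [CommGroup G] [Finite G] (hg : ∃ g : G, g ^ 2 ≠ 1)
    (β δ : Op G) (hβ : β ∈ ({oXY, oXiY} : Set (Op G)))
    (hδ : δ ∈ ({oXY, oXiY, oXYi, oXiYi} : Set (Op G))) :
    (∀ x y z : G × Bool,
        cmul oXY β oXY δ (cmul oXY β oXY δ x y) z =
          cmul oXY β oXY δ x (cmul oXY β oXY δ y z)) ↔
      (β, δ) ∈ ({(oXY, oXY), (oXiY, oXiY)} : Set (Op G × Op G)) := by
  obtain ⟨g, hgg⟩ := hg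
  have hne : g⁻¹ ≠ g := by
    intro he
    exact hgg (by rw [pow_two]; nth_rewrite 1 [← he]; exact inv_mul_cancel g)
  have hne' : g ≠ g⁻¹ := fun h => hne h.symm
  have nAB : (oXY : Op G) ≠ oXiY := by
    intro h; apply hne
    have := congrFun (congrFun h g) 1
    simpa [oXY, oXiY] using this.symm
  have nAC : (oXY : Op G) ≠ oXYi := by
    intro h; apply hne
    have := congrFun (congrFun h 1) g
    simpa [oXY, oXYi] using this.symm
  have nAD : (oXY : Op G) ≠ oXiYi := by
    intro h; apply hne
    have := congrFun (congrFun h 1) g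
    simpa [oXY, oXiYi] using this.symm
  have nBC : (oXiY : Op G) ≠ oXYi := by
    intro h; apply hne
    have := congrFun (congrFun h 1) g
    simpa [oXiY, oXYi] using this.symm
  have nBD : (oXiY : Op G) ≠ oXiYi := by
    intro h; apply hne
    have := congrFun (congrFun h 1) g
    simpa [oXiY, oXiYi] using this.symm
  simp only [Set.mem_insert_iff, Set.mem_singleton_iff] at hβ hδ ⊢
  rcases hβ with rfl | rfl <;> rcases hδ with rfl | rfl | rfl | rfl
  · refine iff_of_true ?_ (Or.inl rfl)
    rintro ⟨a, (_|_)⟩ ⟨b, (_|_)⟩ ⟨c, (_|_)⟩ <;>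
      simp [cmul, oXY, mul_assoc]
  · refine iff_of_false ?_ ?_
    · intro h
      have := h (1, true) (g, false) (1, true)
      simp [cmul, oXY, oXiY] at this
      exact hne this
    · simp [Prod.ext_iff, nAB, nAB.symm, nAC, nAC.symm, nAD, nAD.symm,
        nBC, nBC.symm, nBD, nBD.symm]
  · refine iff_of_false ?_ ?_
    · intro h
      have := h (1, true) (1, true) (g, false)
      simp [cmul, oXY, oXYi] at this
      first | exact hne this | exact hne' this
    · simp [Prod.ext_iff, nAB, nAB.symm, nAC, nAC.symm, nAD, nAD.symm,
        nBC, nBC.symm, nBD, nBD.symm]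
  · refine iff_of_false ?_ ?_
    · intro h
      have := h (1, true) (1, true) (g, false)
      simp [cmul, oXY, oXiYi] at this
      first | exact hne this | exact hne' this
    · simp [Prod.ext_iff, nAB, nAB.symm, nAC, nAC.symm, nAD, nAD.symm,
        nBC, nBC.symm, nBD, nBD.symm]
  · refine iff_of_false ?_ ?_
    · intro h
      have := h (1, true) (g, false) (1, true)
      simp [cmul, oXY, oXiY] at this
      first | exact hne this | exact hne' this
    · simp [Prod.ext_iff, nAB, nAB.symm, nAC, nAC.symm, nAD, nAD.symm,
        nBC, nBC.symm, nBD, nBD.symm]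
  · refine iff_of_true ?_ (Or.inr rfl)
    rintro ⟨a, (_|_)⟩ ⟨b, (_|_)⟩ ⟨c, (_|_)⟩ <;>
      simp [cmul, oXY, oXiY, mul_assoc, mul_comm, mul_left_comm]
  · refine iff_of_false ?_ ?_
    · intro h
      have := h (1, true) (1, true) (g, false)
      simp [cmul, oXY, oXiY, oXYi] at this
      first | exact hne this | exact hne' this
    · simp [Prod.ext_iff, nAB, nAB.symm, nAC, nAC.symm, nAD, nAD.symm,
        nBC, nBC.symm, nBD, nBD.symm]
  · refine iff_of_false ?_ ?_
    · intro h
      have := h (1, true) (1, true) (g, false)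
      simp [cmul, oXY, oXiY, oXiYi] at this
      first | exact hne this | exact hne' this
    · simp [Prod.ext_iff, nAB, nAB.symm, nAC, nAC.symm, nAD, nAD.symm,
        nBC, nBC.symm, nBD, nBD.symm]
end

section
/- Let G be a finite abelian group such that g⁴ = 1 for all g ∈ G and g² ≠ 1 for some g ∈ G. Then the magma G(xy, xy, xy, x⁻¹y) (i.e., g*h = gh, g*h̄ = (gh)‾, ḡ*h = (gh)‾, ḡ*h̄ = g⁻¹h) satisfies the left Bol identity x*(y*(x*z)) = (x*(y*x))*z for all x, y, z, but does not satisfy the flexible law: there exist elements a, b with a*(b*a) ≠ (a*b)*a. In particular it is a left Bol loop that is neither Moufang nor a group. -/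
variable {G : Type*}

private lemma aux1 {G : Type*} [CommGroup G] (x y z : G) : x * (y * (z * x⁻¹)) = y * z := by
  rw [mul_comm z, mul_left_comm y, mul_inv_cancel_left]

private lemma aux2 {G : Type*} [CommGroup G] (x y z : G) (hx : x * x = x⁻¹ * x⁻¹) :
    x * (x * (z * y⁻¹)) = z * (x⁻¹ * (x⁻¹ * y⁻¹)) := by
  rw [← mul_assoc, hx]
  simp [mul_assoc, mul_comm, mul_left_comm]

private lemma aux3 {G : Type*} [CommGroup G] (x : G) (h : x ^ 4 = 1) : x * x = x⁻¹ * x⁻¹ := by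
  rw [← mul_inv]
  refine eq_inv_of_mul_eq_one_left ?_
  calc x * x * (x * x) = x ^ 4 := by
        rw [pow_succ, pow_succ, pow_succ, pow_one]
        simp [mul_assoc]
  _ = 1 := h

/-- For a finite abelian group `G` with `G⁴ = 1` and some `g² ≠ 1`, the
magma `G(xy, xy, xy, x⁻¹y)` satisfies the left Bol identity but is not flexible; in particular
it is a left Bol loop that is neither Moufang nor a group. -/
theorem statement8 [CommGroup G] [Finite G]
    (h4 : ∀ g : G, g ^ 4 = 1) (h2 : ∃ g : G, g ^ 2 ≠ 1) :
    (∀ x y z : G × Bool,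
        cmul oXY oXY oXY oXiY x (cmul oXY oXY oXY oXiY y (cmul oXY oXY oXY oXiY x z)) =
          cmul oXY oXY oXY oXiY (cmul oXY oXY oXY oXiY x (cmul oXY oXY oXY oXiY y x)) z) ∧
    (∃ a b : G × Bool,
        cmul oXY oXY oXY oXiY a (cmul oXY oXY oXY oXiY b a) ≠ cmul oXY oXY oXY oXiY (cmul oXY oXY oXY oXiY a b) a) ∧
    -- in particular, not Moufang:
    (¬ ∀ x y z : G × Bool,
        cmul oXY oXY oXY oXiY (cmul oXY oXY oXY oXiY (cmul oXY oXY oXY oXiY x y) x) z =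
          cmul oXY oXY oXY oXiY x (cmul oXY oXY oXY oXiY y (cmul oXY oXY oXY oXiY x z))) ∧
    -- and not associative:
    (¬ ∀ x y z : G × Bool,
        cmul oXY oXY oXY oXiY (cmul oXY oXY oXY oXiY x y) z =
          cmul oXY oXY oXY oXiY x (cmul oXY oXY oXY oXiY y z)) := by
  obtain ⟨g, hg⟩ := h2
  have hg2 : g * g ≠ 1 := by
    rw [pow_two] at hg; exact hg
  refine ⟨?_, ?_, ?_, ?_⟩
  · rintro ⟨x, bx⟩ ⟨y, by'⟩ ⟨z, bz⟩
    cases bx <;> cases by' <;> cases bz <;>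
      simp only [cmul, oXY, oXiY, Prod.mk.injEq, and_true] <;>
      (try simp [mul_assoc, mul_comm, mul_left_comm])
    all_goals first
      | exact aux1 _ _ _
      | exact aux2 _ _ _ (aux3 _ (h4 _))
  · refine ⟨(g, true), (1, true), ?_⟩
    simp only [cmul, oXY, oXiY, ne_eq, Prod.mk.injEq]
    intro ⟨h, _⟩
    simp at h
    exact hg2 h
  · intro H
    have := H (g, true) (1, true) (1, false)
    simp only [cmul, oXY, oXiY, Prod.mk.injEq] at this
    have h1 := this.1
    simp at h1
    exact hg2 (by simpa [mul_comm] using h1.symm)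
  · intro H
    have := H (g, true) (1, true) (g, true)
    simp only [cmul, oXY, oXiY, Prod.mk.injEq] at this
    have h1 := this.1
    simp at h1
    exact hg2 (by simpa using h1.symm)
end

section
/- Let G be a finite abelian group such that g⁴ = 1 for all g ∈ G and g² ≠ 1 for some g ∈ G. Then the magma G(xy, x⁻¹y, xy, xy) (i.e., g*h = gh, g*h̄ = (g⁻¹h)‾, ḡ*h = (gh)‾, ḡ*h̄ = gh) satisfies the left Bol identity x*(y*(x*z)) = (x*(y*x))*z for all x, y, z, but does not satisfy the flexible law: there exist elements a, b with a*(b*a) ≠ (a*b)*a. In particular it is a left Bol loop that is neither Moufang nor a group. -/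
variable {G : Type*}

/-- Auxiliary: if `g⁻¹ = g` then `g ^ 2 = 1`. -/
lemma aux_sq_of_inv_eq {H : Type*} [Group H] {g : H} (h : g⁻¹ = g) : g ^ 2 = 1 := by
  rw [pow_two]
  calc g * g = g⁻¹ * g := by rw [h]
    _ = 1 := inv_mul_cancel g

/-- For a finite abelian group `G` with `G⁴ = 1` and some `g² ≠ 1`, the
magma `G(xy, x⁻¹y, xy, xy)` satisfies the left Bol identity but is not flexible; in particular
it is a left Bol loop that is neither Moufang nor a group. -/
theorem statement9 [CommGroup G] [Finite G]
    (h4 : ∀ g : G, g ^ 4 = 1) (h2 : ∃ g : G, g ^ 2 ≠ 1) :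
    (∀ x y z : G × Bool,
        cmul oXY oXiY oXY oXY x (cmul oXY oXiY oXY oXY y (cmul oXY oXiY oXY oXY x z)) =
          cmul oXY oXiY oXY oXY (cmul oXY oXiY oXY oXY x (cmul oXY oXiY oXY oXY y x)) z) ∧
    (∃ a b : G × Bool,
        cmul oXY oXiY oXY oXY a (cmul oXY oXiY oXY oXY b a) ≠ cmul oXY oXiY oXY oXY (cmul oXY oXiY oXY oXY a b) a) ∧
    -- in particular, not Moufang:
    (¬ ∀ x y z : G × Bool,
        cmul oXY oXiY oXY oXY (cmul oXY oXiY oXY oXY (cmul oXY oXiY oXY oXY x y) x) z =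
          cmul oXY oXiY oXY oXY x (cmul oXY oXiY oXY oXY y (cmul oXY oXiY oXY oXY x z))) ∧
    -- and not associative:
    (¬ ∀ x y z : G × Bool,
        cmul oXY oXiY oXY oXY (cmul oXY oXiY oXY oXY x y) z =
          cmul oXY oXiY oXY oXY x (cmul oXY oXiY oXY oXY y z)) := by
  obtain ⟨g, hg⟩ := h2
  have ha2 : ∀ a : G, a⁻¹ * a⁻¹ = a * a := by
    intro a
    have h := h4 a
    rw [show (4:ℕ) = 2 + 2 from rfl, pow_add, pow_two] at h
    calc a⁻¹ * a⁻¹ = a⁻¹ * a⁻¹ * (a * a * (a * a)) := by rw [h, mul_one]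
      _ = a * a := by simp [mul_assoc]
  refine ⟨?_, ⟨(1, true), (g, false), ?_⟩, ?_, ?_⟩
  · rintro ⟨a, _ | _⟩ ⟨b, _ | _⟩ ⟨c, _ | _⟩ <;>
      simp only [cmul, oXY, oXiY, Prod.mk.injEq, and_true] <;>
      first
        | (simp [mul_comm, mul_left_comm, mul_assoc]; done)
        | (simp [mul_comm, mul_left_comm, mul_assoc];
           rw [mul_comm c a⁻¹, mul_left_comm b a⁻¹, mul_inv_cancel_left])
        | (simp [ha2, mul_comm, mul_left_comm, mul_assoc]; done)
  · simp only [cmul, oXY, oXiY, one_mul, mul_one, ne_eq, Prod.mk.injEq, and_true]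
    intro h
    exact hg (aux_sq_of_inv_eq h)
  · intro h
    have := h (1, true) (g, false) (1, false)
    simp only [cmul, oXY, oXiY, one_mul, mul_one, Prod.mk.injEq, and_true] at this
    exact hg (aux_sq_of_inv_eq this.symm)
  · intro h
    have := h (1, true) (g, false) (1, true)
    simp only [cmul, oXY, oXiY, one_mul, mul_one, Prod.mk.injEq, and_true] at this
    exact hg (aux_sq_of_inv_eq this.symm)
end

section
/- Let G be a finite abelian group such that g⁴ = 1 for all g ∈ G and g² ≠ 1 for some g ∈ G. Then there is no isomorphism of magmas between G(xy, xy, xy, x⁻¹y) and G(xy, x⁻¹y, xy, xy). (Indeed, every element ḡ of the second copy Ḡ satisfies ḡ*ḡ = 1 in the first magma, whereas in the second magma the order of ḡ is at least the order of g in G.) -/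
variable {G : Type*}

/-- For a finite abelian group `G` with `G⁴ = 1` and some `g² ≠ 1`, the
magmas `G(xy, xy, xy, x⁻¹y)` and `G(xy, x⁻¹y, xy, xy)` are not isomorphic. -/
theorem statement10 [CommGroup G] [Finite G]
    (h4 : ∀ g : G, g ^ 4 = 1) (h2 : ∃ g : G, g ^ 2 ≠ 1) :
    ¬ MagIso (cmul (G := G) oXY oXY oXY oXiY) (cmul (G := G) oXY oXiY oXY oXY) := by
  rintro ⟨f, hf⟩
  obtain ⟨g₀, hg₀⟩ := h2
  -- f maps the unique idempotent (1, false) to (1, false)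
  have hidem : f ((1 : G), false) = ((1 : G), false) := by
    have key := hf (1, false) (1, false)
    have h1 : cmul (G := G) oXY oXY oXY oXiY (1, false) (1, false) = ((1 : G), false) := by
      simp [cmul, oXY]
    rw [h1] at key
    rcases hp : f ((1 : G), false) with ⟨g, b⟩
    rw [hp] at key
    cases b with
    | false =>
      simp only [cmul, oXY, Prod.mk.injEq] at key
      have hg : g = 1 := by
        have : g * g = g * 1 := by rw [mul_one]; exact key.1.symm
        exact mul_left_cancel this
      rw [hg]
    | true =>
      simp only [cmul, oXY] at key
      exact absurd (congrArg Prod.snd key) (by simp)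
  -- the two "square = identity" sets
  set S1 : Set (G × Bool) := {x | cmul (G := G) oXY oXY oXY oXiY x x = (1, false)} with hS1
  set S2 : Set (G × Bool) := {x | cmul (G := G) oXY oXiY oXY oXY x x = (1, false)} with hS2
  have himg : f '' S1 = S2 := by
    ext y
    constructor
    · rintro ⟨x, hx, rfl⟩
      have := hf x x
      rw [hx, hidem] at this
      exact this.symm
    · intro hy
      refine ⟨f.symm y, ?_, by simp⟩
      have h1 := hf (f.symm y) (f.symm y)
      simp only [Equiv.apply_symm_apply] at h1
      have hy' : cmul (G := G) oXY oXiY oXY oXY y y = (1, false) := hy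
      show cmul (G := G) oXY oXY oXY oXiY (f.symm y) (f.symm y) = (1, false)
      apply f.injective
      rw [h1, hy', hidem]
  have hfin1 : S1.Finite := Set.toFinite _
  have hsub : S2 ⊆ S1 := by
    rintro ⟨g, b⟩ hg
    cases b with
    | false => exact hg
    | true =>
      simp only [hS1, Set.mem_setOf_eq, cmul, oXiY, Prod.mk.injEq]
      simp
  have hmem1 : ((g₀, true) : G × Bool) ∈ S1 := by
    simp only [hS1, Set.mem_setOf_eq, cmul, oXiY, Prod.mk.injEq]
    simp
  have hmem2 : ((g₀, true) : G × Bool) ∉ S2 := by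
    simp only [hS2, Set.mem_setOf_eq, cmul, oXY, Prod.mk.injEq]
    intro h
    exact hg₀ (by rw [pow_two]; exact h.1)
  have hss : S2 ⊂ S1 := ⟨hsub, fun h => hmem2 (h hmem1)⟩
  have hlt : S2.ncard < S1.ncard := Set.ncard_lt_ncard hss hfin1
  have heq : S1.ncard = S2.ncard := by
    rw [← himg, Set.ncard_image_of_injective _ f.injective]
  omega
end

section
/- Let G be a finite nonabelian group. Let α = ((x,y) ↦ xy), β ∈ {xy, yx, yx⁻¹, x⁻¹y}, γ ∈ {xy, yx}, and δ ∈ Θ. Then the multiplication * of G(α,β,γ,δ) is associative (equivalently, G(α,β,γ,δ) is a group) if and only if (β,γ,δ) = (xy, xy, xy), i.e., the magma is G(xy, xy, xy, xy). -/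
variable {G : Type*}

/-- Associativity in the nonabelian case: `G(α,β,γ,δ)` is associative
iff `(β,γ,δ) = (xy, xy, xy)`. -/
theorem statement12 [Group G] [Finite G] (hna : ∃ a b : G, a * b ≠ b * a)
    (β γ δ : Op G) (hβ : β ∈ ({oXY, oYX, oYXi, oXiY} : Set (Op G)))
    (hγ : γ ∈ ({oXY, oYX} : Set (Op G))) (hδ : δ ∈ Theta G) :
    (∀ x y z : G × Bool,
        cmul oXY β γ δ (cmul oXY β γ δ x y) z =
          cmul oXY β γ δ x (cmul oXY β γ δ y z)) ↔
      (β, γ, δ) = ((oXY : Op G), (oXY : Op G), (oXY : Op G)) := by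

  constructor
  · intro h
    obtain ⟨a, b, hab⟩ := hna
    simp only [Theta, Set.mem_insert_iff, Set.mem_singleton_iff] at hβ hγ hδ
    rcases hγ with rfl | rfl
    · rcases hβ with rfl | rfl | rfl | rfl
      · rcases hδ with rfl | rfl | rfl | rfl | rfl | rfl | rfl | rfl
        · rfl
        · exfalso
          have hz : ∀ z : G, z⁻¹ = z := by
            intro z
            have := h (1, true) (1, true) (z, false)
            simp [cmul, oXY, oXYi] at this
            exact this.symm
          exact hab (by rw [← hz (a * b), mul_inv_rev, hz, hz])
        · exfalso
          have hz : ∀ z : G, z⁻¹ = z := by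
            intro z
            have := h (z, false) (1, true) (1, true)
            simp [cmul, oXY, oXiY] at this
            exact this
          exact hab (by rw [← hz (a * b), mul_inv_rev, hz, hz])
        · exfalso
          have hz : ∀ z : G, z⁻¹ = z := by
            intro z
            have := h (1, true) (1, true) (z, false)
            simp [cmul, oXY, oXiYi] at this
            exact this.symm
          exact hab (by rw [← hz (a * b), mul_inv_rev, hz, hz])
        · exfalso
          have := h (a, true) (1, true) (b, false)
          simp [cmul, oXY, oYX] at this
          exact hab this
        · exfalso
          have := h (a⁻¹, true) (1, true) (b, false)
          simp [cmul, oXY, oYXi] at this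
          exact hab this
        · exfalso
          have hz : ∀ z : G, z⁻¹ = z := by
            intro z
            have := h (1, true) (1, true) (z, false)
            simp [cmul, oXY, oYiX] at this
            exact this.symm
          exact hab (by rw [← hz (a * b), mul_inv_rev, hz, hz])
        · exfalso
          have hz : ∀ z : G, z⁻¹ = z := by
            intro z
            have := h (1, true) (1, true) (z, false)
            simp [cmul, oXY, oYiXi] at this
            exact this.symm
          exact hab (by rw [← hz (a * b), mul_inv_rev, hz, hz])
      · exfalso
        have := h (a, false) (b, false) (1, true)
        simp [cmul, oXY, oYX] at this
        exact hab this
      · exfalso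
        have := h (a⁻¹, false) (1, true) (b, false)
        simp [cmul, oXY, oYXi] at this
        exact hab this
      · exfalso
        have := h (a⁻¹, false) (b⁻¹, false) (1, true)
        simp [cmul, oXY, oXiY, mul_inv_rev] at this
        exact hab this.symm
    · exfalso
      have := h ((1 : G), true) (a, false) (b, false)
      simp [cmul, oYX] at this
      exact hab this.symm
  · intro h
    simp only [Prod.mk.injEq] at h
    obtain ⟨rfl, rfl, rfl⟩ := h
    rintro ⟨x, _ | _⟩ ⟨y, _ | _⟩ ⟨z, _ | _⟩ <;>
      simp [cmul, oXY, mul_assoc]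
end

section
/- Let G be a finite nonabelian group in which g² is central for every g ∈ G. Then the magma G(xy, x⁻¹y, xy, x⁻¹y) (i.e., g*h = gh, g*h̄ = (g⁻¹h)‾, ḡ*h = (gh)‾, ḡ*h̄ = g⁻¹h) has two-sided identity 1 ∈ G and satisfies the left Bol identity x*(y*(x*z)) = (x*(y*x))*z for all x, y, z, but does not satisfy the Moufang identity ((x*y)*x)*z = x*(y*(x*z)) for all x, y, z. -/
variable {G : Type*}

/-- `m` has two-sided identity `1 ∈ G`, satisfies the left Bol identity, and fails
the Moufang identity. -/
def BolNotMoufang [Group G] (m : G × Bool → G × Bool → G × Bool) : Prop :=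
  (∀ a : G × Bool, m ((1 : G), false) a = a ∧ m a ((1 : G), false) = a) ∧
  (∀ x y z : G × Bool, m x (m y (m x z)) = m (m x (m y x)) z) ∧
  ¬ ∀ x y z : G × Bool, m (m (m x y) x) z = m x (m y (m x z))

/-- For a finite nonabelian group `G` with all squares central, the magma
`G(xy, x⁻¹y, xy, x⁻¹y)` has two-sided identity `1`, is left Bol, but not Moufang. -/
theorem statement15 [Group G] [Finite G] (hna : ∃ a b : G, a * b ≠ b * a)
    (h2 : ∀ g x : G, g ^ 2 * x = x * g ^ 2) :
    BolNotMoufang (cmul (G := G) oXY oXiY oXY oXiY) := by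
  obtain ⟨a0, b0, hab⟩ := hna
  have hsq : ∀ g x : G, g * g * x = x * (g * g) := by
    intro g x
    have := h2 g x
    rwa [pow_two] at this
  have key : ∀ a b c : G, a * (b * (a⁻¹ * c)) = a⁻¹ * (b * (a * c)) := by
    intro a b c
    have h := hsq a b
    calc a * (b * (a⁻¹ * c)) = a⁻¹ * (a * a * b) * (a⁻¹ * c) := by group
      _ = a⁻¹ * (b * (a * a)) * (a⁻¹ * c) := by rw [h]
      _ = a⁻¹ * (b * (a * c)) := by group
  refine ⟨?_, ?_, ?_⟩
  · rintro ⟨g, b⟩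
    cases b <;> simp [cmul, oXY, oXiY]
  · rintro ⟨a, p⟩ ⟨b, q⟩ ⟨c, r⟩
    cases p <;> cases q <;> cases r <;>
      simp only [cmul, oXY, oXiY, Prod.mk.injEq, and_true, and_self] <;>
      group <;>
      first
        | (have hk := key a b⁻¹ c; group at hk; exact hk)
        | (have hk := key a b c; group at hk; exact hk)
  · intro h
    have h1 := h (a0, true) (b0, false) ((1 : G), false)
    simp only [cmul, oXY, oXiY, Prod.mk.injEq, and_true] at h1
    apply hab
    have h2' : a0 * b0⁻¹ = b0⁻¹ * a0 := by
      calc a0 * b0⁻¹ = a0 * ((a0 * b0)⁻¹ * a0 * 1) := by group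
        _ = a0 * (a0⁻¹ * (b0⁻¹ * (a0 * 1))) := by rw [h1]
        _ = b0⁻¹ * a0 := by group
    symm
    calc b0 * a0 = b0 * (a0 * b0⁻¹) * b0 := by group
      _ = b0 * (b0⁻¹ * a0) * b0 := by rw [h2']
      _ = a0 * b0 := by group
end

section
/- Let G be a finite nonabelian group in which g² is central for every g ∈ G. Then the magma G(xy, xy, yx, yx) (i.e., g*h = gh, g*h̄ = (gh)‾, ḡ*h = (hg)‾, ḡ*h̄ = hg) has two-sided identity 1 ∈ G and satisfies the left Bol identity x*(y*(x*z)) = (x*(y*x))*z for all x, y, z, but does not satisfy the Moufang identity ((x*y)*x)*z = x*(y*(x*z)) for all x, y, z. -/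
variable {G : Type*}

/-- For a finite nonabelian group `G` with all squares central, the magma
`G(xy, xy, yx, yx)` has two-sided identity `1`, is left Bol, but not Moufang. -/
theorem statement16 [Group G] [Finite G] (hna : ∃ a b : G, a * b ≠ b * a)
    (h2 : ∀ g x : G, g ^ 2 * x = x * g ^ 2) :
    BolNotMoufang (cmul (G := G) oXY oXY oYX oYX) := by
  have hc : ∀ g x : G, g * (g * x) = x * (g * g) := by
    intro g x
    have := h2 g x
    rw [pow_two] at this
    rw [← mul_assoc, this]
  obtain ⟨a, b, hab⟩ := hna
  refine ⟨?_, ?_, ?_⟩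
  · rintro ⟨g, _ | _⟩ <;> simp [cmul, oXY, oYX]
  · rintro ⟨x, _ | _⟩ ⟨y, _ | _⟩ ⟨z, _ | _⟩ <;>
      simp only [cmul, oXY, oYX, Prod.mk.injEq, and_true, true_and, and_self, mul_assoc] <;>
      first
        | rfl
        | rw [hc, hc x y, mul_assoc]
        | rw [hc]
  · intro h
    have := h (a, true) (b, false) (1, false)
    simp only [cmul, oXY, oYX, Prod.mk.injEq, one_mul, mul_one] at this
    exact hab (mul_right_cancel (b := a) (by simp only [mul_assoc] at this ⊢; exact this.1))
end

section
/- Let G be a finite nonabelian group in which g² is central and g⁴ = 1 for every g ∈ G. Then each of the four magmas G(xy, xy, xy, x⁻¹y), G(xy, xy, yx, yx⁻¹), G(xy, x⁻¹y, xy, xy), and G(xy, x⁻¹y, yx, yx) has two-sided identity 1 ∈ G and satisfies the left Bol identity x*(y*(x*z)) = (x*(y*x))*z for all x, y, z, but none of them satisfies the Moufang identity ((x*y)*x)*z = x*(y*(x*z)) for all x, y, z. -/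
variable {G : Type*}

/-- For a finite nonabelian group `G` with all squares central and `G⁴ = 1`,
each of `G(xy, xy, xy, x⁻¹y)`, `G(xy, xy, yx, yx⁻¹)`, `G(xy, x⁻¹y, xy, xy)` and
`G(xy, x⁻¹y, yx, yx)` has two-sided identity `1`, is left Bol, but not Moufang. -/
theorem statement17 [Group G] [Finite G] (hna : ∃ a b : G, a * b ≠ b * a)
    (h2 : ∀ g x : G, g ^ 2 * x = x * g ^ 2) (h4 : ∀ g : G, g ^ 4 = 1) :
    BolNotMoufang (cmul (G := G) oXY oXY oXY oXiY) ∧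
    BolNotMoufang (cmul (G := G) oXY oXY oYX oYXi) ∧
    BolNotMoufang (cmul (G := G) oXY oXiY oXY oXY) ∧
    BolNotMoufang (cmul (G := G) oXY oXiY oYX oYX) := by

  classical
  -- helper lemmas
  have hc : ∀ g x : G, g * g * x = x * (g * g) := fun g x => by
    simpa [sq] using h2 g x
  have h44 : ∀ g : G, (g * g) * (g * g) = 1 := fun g => by
    have := h4 g
    rw [show (4:ℕ) = 2 * 2 by norm_num, pow_mul, sq, sq] at this
    exact this
  have L4 : ∀ g : G, g * g = g⁻¹ * g⁻¹ := fun g => by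
    rw [← mul_inv_rev]
    exact (inv_eq_of_mul_eq_one_left (h44 g)).symm
  have L2 : ∀ a b : G, a * b * a⁻¹ = a⁻¹ * b * a := by
    intro a b
    calc a * b * a⁻¹ = a⁻¹ * (a * a * b) * a⁻¹ := by group
      _ = a⁻¹ * (b * (a * a)) * a⁻¹ := by rw [hc]
      _ = a⁻¹ * b * a := by group
  have L1 : ∀ a b : G, a * b * a = a⁻¹ * b * a⁻¹ := by
    intro a b
    calc a * b * a = a * b * a⁻¹ * (a * a) := by group
      _ = a⁻¹ * b * a * (a * a) := by rw [L2]
      _ = a⁻¹ * b * a * (a⁻¹ * a⁻¹) := by rw [L4]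
      _ = a⁻¹ * b * a⁻¹ := by group
  have L3 : ∀ g x y : G, g * g * x * y = x * y * (g * g) := by
    intro g x y
    calc g * g * x * y = g * g * (x * y) := by group
      _ = x * y * (g * g) := hc g (x * y)
  have habel : (∀ h : G, h = h⁻¹) → False := by
    intro hh
    obtain ⟨a, b, hne⟩ := hna
    apply hne
    calc a * b = (a * b)⁻¹ := hh (a * b)
      _ = b⁻¹ * a⁻¹ := by rw [mul_inv_rev]
      _ = b * a := by rw [← hh a, ← hh b]
  refine ⟨⟨?_, ?_, ?_⟩, ⟨?_, ?_, ?_⟩, ⟨?_, ?_, ?_⟩, ⟨?_, ?_, ?_⟩⟩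
  · rintro ⟨g, _ | _⟩ <;> constructor <;>
      simp [cmul, oXY, oXiY, oYX, oYXi]
  · rintro ⟨a, p⟩ ⟨b, q⟩ ⟨c, r⟩
    rcases p <;> rcases q <;> rcases r <;>
      simp only [cmul, oXY, oXiY, oYX, oYXi, Prod.mk.injEq] <;>
      constructor <;> try rfl
    all_goals try group
    all_goals try simp only [zpow_neg, zpow_one, zpow_ofNat, pow_one, pow_two, mul_inv_rev]
    all_goals first
      | (rw [L1]; done)
      | (rw [L2]; done)
      | (rw [hc]; group; done)
      | (rw [L3, L4]; done)
      | (rw [mul_assoc, mul_assoc, ← hc]; group; done)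
      | (rw [← L4, L3]; group; done)
  · intro H
    apply habel
    intro h
    have := H ((1 : G), true) (h, false) ((1 : G), false)
    simp [cmul, oXY, oXiY, oYX, oYXi] at this
    first
    | exact this
    | exact this.symm
  · rintro ⟨g, _ | _⟩ <;> constructor <;>
      simp [cmul, oXY, oXiY, oYX, oYXi]
  · rintro ⟨a, p⟩ ⟨b, q⟩ ⟨c, r⟩
    rcases p <;> rcases q <;> rcases r <;>
      simp only [cmul, oXY, oXiY, oYX, oYXi, Prod.mk.injEq] <;>
      constructor <;> try rfl
    all_goals try group
    all_goals try simp only [zpow_neg, zpow_one, zpow_ofNat, pow_one, pow_two, mul_inv_rev]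
    all_goals first
      | (rw [L1]; done)
      | (rw [L2]; done)
      | (rw [hc]; group; done)
      | (rw [L3, L4]; done)
      | (rw [mul_assoc, mul_assoc, ← hc]; group; done)
      | (rw [← L4, L3]; group; done)
  · intro H
    apply habel
    intro h
    have := H ((1 : G), true) (h, false) ((1 : G), false)
    simp [cmul, oXY, oXiY, oYX, oYXi] at this
    first
    | exact this
    | exact this.symm
  · rintro ⟨g, _ | _⟩ <;> constructor <;>
      simp [cmul, oXY, oXiY, oYX, oYXi]
  · rintro ⟨a, p⟩ ⟨b, q⟩ ⟨c, r⟩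
    rcases p <;> rcases q <;> rcases r <;>
      simp only [cmul, oXY, oXiY, oYX, oYXi, Prod.mk.injEq] <;>
      constructor <;> try rfl
    all_goals try group
    all_goals try simp only [zpow_neg, zpow_one, zpow_ofNat, pow_one, pow_two, mul_inv_rev]
    all_goals first
      | (rw [L1]; done)
      | (rw [L2]; done)
      | (rw [hc]; group; done)
      | (rw [L3, L4]; done)
      | (rw [mul_assoc, mul_assoc, ← hc]; group; done)
      | (rw [← L4, L3]; group; done)
  · intro H
    apply habel
    intro h
    have := H ((1 : G), true) (h, false) ((1 : G), false)
    simp [cmul, oXY, oXiY, oYX, oYXi] at this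
    first
    | exact this
    | exact this.symm
  · rintro ⟨g, _ | _⟩ <;> constructor <;>
      simp [cmul, oXY, oXiY, oYX, oYXi]
  · rintro ⟨a, p⟩ ⟨b, q⟩ ⟨c, r⟩
    rcases p <;> rcases q <;> rcases r <;>
      simp only [cmul, oXY, oXiY, oYX, oYXi, Prod.mk.injEq] <;>
      constructor <;> try rfl
    all_goals try group
    all_goals try simp only [zpow_neg, zpow_one, zpow_ofNat, pow_one, pow_two, mul_inv_rev]
    all_goals first
      | (rw [L1]; done)
      | (rw [L2]; done)
      | (rw [hc]; group; done)
      | (rw [L3, L4]; done)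
      | (rw [mul_assoc, mul_assoc, ← hc]; group; done)
      | (rw [← L4, L3]; group; done)
  · intro H
    apply habel
    intro h
    have := H ((1 : G), true) (h, false) ((1 : G), false)
    simp [cmul, oXY, oXiY, oYX, oYXi] at this
    first
    | exact this
    | exact this.symm
end

section
/- Let G be a finite nonabelian group in which g² is central and g⁴ = 1 for every g ∈ G. For a magma (M,*), let Z(M) = {a ∈ M : a*b = b*a for all b ∈ M}. Then the cardinality of Z(M) equals 2·|Z(G)| when (M,*) = G(xy, xy, yx, yx), while the cardinality of Z(M) is at most |Z(G)| when (M,*) = G(xy, x⁻¹y, xy, xy) and when (M,*) = G(xy, x⁻¹y, yx, yx), where Z(G) is the center of G. -/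
variable {G : Type*}

/-- With `Z(M) = {a ∈ M : a*b = b*a for all b}`, we have `|Z(M)| = 2|Z(G)|`
for `G(xy, xy, yx, yx)`, while `|Z(M)| ≤ |Z(G)|` for `G(xy, x⁻¹y, xy, xy)` and
`G(xy, x⁻¹y, yx, yx)`. -/
theorem statement18 [Group G] [Finite G] (hna : ∃ a b : G, a * b ≠ b * a)
    (h2 : ∀ g x : G, g ^ 2 * x = x * g ^ 2) (h4 : ∀ g : G, g ^ 4 = 1) :
    Set.ncard {a : G × Bool | ∀ b, cmul oXY oXY oYX oYX a b = cmul oXY oXY oYX oYX b a} =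
      2 * Nat.card (Subgroup.center G) ∧
    Set.ncard {a : G × Bool | ∀ b, cmul oXY oXiY oXY oXY a b = cmul oXY oXiY oXY oXY b a} ≤
      Nat.card (Subgroup.center G) ∧
    Set.ncard {a : G × Bool | ∀ b, cmul oXY oXiY oYX oYX a b = cmul oXY oXiY oYX oYX b a} ≤
      Nat.card (Subgroup.center G) := by
  -- A generic bound: any set contained in `Z(G) × {false}` has at most `|Z(G)|` elements.
  have bound : ∀ S : Set (G × Bool),
      S ⊆ (fun g => (g, false)) '' (↑(Subgroup.center G) : Set G) →
      S.ncard ≤ Nat.card (Subgroup.center G) := by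
    intro S hS
    have hfin : ((fun g : G => (g, false)) '' (↑(Subgroup.center G) : Set G)).Finite :=
      Set.toFinite _
    calc S.ncard ≤ _ := Set.ncard_le_ncard hS hfin
      _ = (↑(Subgroup.center G) : Set G).ncard :=
          Set.ncard_image_of_injective _ (fun a b h => (Prod.mk.injEq ..).mp h |>.1)
      _ = Nat.card (Subgroup.center G) := by rw [← Nat.card_coe_set_eq]; rfl
  refine ⟨?_, ?_, ?_⟩
  · -- first magma: the commuting set is exactly `Z(G) × Bool`
    have h1 : {a : G × Bool | ∀ b, cmul oXY oXY oYX oYX a b = cmul oXY oXY oYX oYX b a}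
        = (↑(Subgroup.center G) : Set G) ×ˢ (Set.univ : Set Bool) := by
      ext ⟨g, b⟩
      simp only [Set.mem_setOf_eq, Set.mem_prod, Set.mem_univ, and_true, SetLike.mem_coe,
        Subgroup.mem_center_iff]
      constructor
      · intro ha h
        cases b
        · have := ha (h, false)
          simp only [cmul, oXY, oYX, Prod.mk.injEq] at this
          exact this.1.symm
        · have := ha (h, true)
          simp only [cmul, oXY, oYX, Prod.mk.injEq] at this
          exact this.1
      · intro hc b
        obtain ⟨h, _ | _⟩ := b <;> cases b <;>
          simp [cmul, oXY, oYX, hc h]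
    rw [h1, ← Nat.card_coe_set_eq, Nat.card_congr (Equiv.Set.prod _ _), Nat.card_prod]
    simp [Nat.card_eq_fintype_card, mul_comm]
  · -- second magma
    apply bound
    rintro ⟨g, b⟩ ha
    cases b
    · -- `(g, false)` commutes only if `g` is central
      refine ⟨g, ?_, rfl⟩
      simp only [SetLike.mem_coe, Subgroup.mem_center_iff]
      intro h
      have := ha (h, false)
      simp only [Set.mem_setOf_eq, cmul, oXY, Prod.mk.injEq] at this
      exact this.1.symm
    · -- `(g, true)` cannot commute with everything: it would force `G` abelian
      exfalso
      have key : ∀ h : G, g * h = h⁻¹ * g := by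
        intro h
        have := ha (h, false)
        simp only [Set.mem_setOf_eq, cmul, oXY, oXiY, Prod.mk.injEq] at this
        exact this.1
      have inv : ∀ h : G, h⁻¹ = g * h * g⁻¹ := by
        intro h; rw [key h]; group
      obtain ⟨a, b, hab⟩ := hna
      apply hab
      have h1 : (a * b)⁻¹ = a⁻¹ * b⁻¹ := by
        rw [inv (a * b), inv a, inv b]; group
      calc a * b = ((a * b)⁻¹)⁻¹ := by rw [inv_inv]
        _ = (a⁻¹ * b⁻¹)⁻¹ := by rw [h1]
        _ = b * a := by simp
  · -- third magma
    apply bound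
    rintro ⟨g, b⟩ ha
    cases b
    · refine ⟨g, ?_, rfl⟩
      simp only [SetLike.mem_coe, Subgroup.mem_center_iff]
      intro h
      have := ha (h, false)
      simp only [Set.mem_setOf_eq, cmul, oXY, Prod.mk.injEq] at this
      exact this.1.symm
    · exfalso
      have key : ∀ h : G, h = h⁻¹ := by
        intro h
        have := ha (h, false)
        simp only [Set.mem_setOf_eq, cmul, oXY, oXiY, oYX, Prod.mk.injEq] at this
        exact mul_right_cancel this.1
      obtain ⟨a, b, hab⟩ := hna
      apply hab
      calc a * b = (a * b)⁻¹ := key _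
        _ = b⁻¹ * a⁻¹ := mul_inv_rev a b
        _ = b * a := by rw [← key b, ← key a]
end

section
/- Let G be a finite nonabelian group in which g² is central and g⁴ = 1 for every g ∈ G. Then there is no isomorphism of magmas between G(xy, x⁻¹y, xy, xy) and G(xy, xy, yx, yx), and there is no isomorphism of magmas between G(xy, xy, yx, yx) and G(xy, x⁻¹y, yx, yx). -/
variable {G : Type*}

/-- The set of commuting pairs of a magma. -/
def commSet {A : Type*} (m : A → A → A) : Set (A × A) :=
  {p | m p.1 p.2 = m p.2 p.1}

lemma magIso_card_comm {A B : Type*} (m : A → A → A) (n : B → B → B)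
    (h : MagIso m n) : Nat.card (commSet m) = Nat.card (commSet n) := by
  obtain ⟨f, hf⟩ := h
  refine Nat.card_congr (Equiv.subtypeEquiv (f.prodCongr f) ?_)
  rintro ⟨a, b⟩
  simp only [commSet, Set.mem_setOf_eq, Equiv.prodCongr_apply, Prod.map]
  constructor
  · intro h; rw [← hf, ← hf, h]
  · intro h; apply f.injective; rw [hf, hf, h]

lemma exists_sq_ne_one [Group G] (hna : ∃ a b : G, a * b ≠ b * a) :
    ∃ a : G, a * a ≠ 1 := by
  by_contra h
  push_neg at h
  obtain ⟨a, b, hab⟩ := hna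
  have inv : ∀ g : G, g⁻¹ = g := fun g => inv_eq_of_mul_eq_one_right (h g)
  apply hab
  calc a * b = (a * b)⁻¹ := (inv _).symm
    _ = b⁻¹ * a⁻¹ := by rw [mul_inv_rev]
    _ = b * a := by rw [inv, inv]

/-- For a finite nonabelian group `G` with all squares central and `G⁴ = 1`,
`G(xy, x⁻¹y, xy, xy) ≇ G(xy, xy, yx, yx)` and `G(xy, xy, yx, yx) ≇ G(xy, x⁻¹y, yx, yx)`. -/
theorem statement19 [Group G] [Finite G] (hna : ∃ a b : G, a * b ≠ b * a)
    (h2 : ∀ g x : G, g ^ 2 * x = x * g ^ 2) (h4 : ∀ g : G, g ^ 4 = 1) :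
    ¬ MagIso (cmul (G := G) oXY oXiY oXY oXY) (cmul (G := G) oXY oXY oYX oYX) ∧
    ¬ MagIso (cmul (G := G) oXY oXY oYX oYX) (cmul (G := G) oXY oXiY oYX oYX) := by
  obtain ⟨a, ha⟩ := exists_sq_ne_one hna
  have ha' : a⁻¹ ≠ a := fun h => ha (by nth_rewrite 2 [← h]; exact mul_inv_cancel a)
  have h12 : commSet (cmul (G := G) oXY oXiY oXY oXY) ⊂
      commSet (cmul (G := G) oXY oXY oYX oYX) := by
    constructor
    · rintro ⟨⟨g, (_|_)⟩, ⟨k, (_|_)⟩⟩ hp <;>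
        simp only [commSet, Set.mem_setOf_eq, cmul, oXY, oXiY, oYX] at hp ⊢ <;>
        first | rfl | exact hp | exact hp.symm
    · intro hsub
      have := hsub (a := ((a, false), (1, true)))
        (by simp [commSet, cmul, oXY, oYX])
      simp [commSet, cmul, oXY, oXiY, ha'] at this
  have h32 : commSet (cmul (G := G) oXY oXiY oYX oYX) ⊂
      commSet (cmul (G := G) oXY oXY oYX oYX) := by
    constructor
    · rintro ⟨⟨g, (_|_)⟩, ⟨k, (_|_)⟩⟩ hp <;>
        simp only [commSet, Set.mem_setOf_eq, cmul, oXY, oXiY, oYX] at hp ⊢ <;>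
        first | rfl | exact hp | exact hp.symm
    · intro hsub
      have := hsub (a := ((a, false), (1, true)))
        (by simp [commSet, cmul, oXY, oYX])
      simp [commSet, cmul, oXY, oXiY, oYX, ha'] at this
  have hfin : (commSet (cmul (G := G) oXY oXY oYX oYX)).Finite := Set.toFinite _
  have c12 := Set.ncard_lt_ncard h12 hfin
  have c32 := Set.ncard_lt_ncard h32 hfin
  constructor
  · intro hiso
    have := magIso_card_comm _ _ hiso
    rw [Nat.card_coe_set_eq, Nat.card_coe_set_eq] at this
    omega
  · intro hiso
    have := magIso_card_comm _ _ hiso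
    rw [Nat.card_coe_set_eq, Nat.card_coe_set_eq] at this
    omega
end
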